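/- Let G be a locally nilpotent group, U a subgroup of G, and M a maximal subgroup of U. Then M is normal in U. -/

import Mathlib

/-!
If `M` were not normal in `U`, some `u ∈ U` would give `M ⊔ M^u = U` by maximality,
so `u ∈ ⟨M, M^u⟩`. This membership involves only finitely many elements of `M`, hence
already holds for a finitely generated `K ≤ M` inside the nilpotent group `⟨K, u⟩`.
In a nilpotent group `g ∈ ⟨H, H^g⟩` forces `g ∈ H`: descending the upper central series,
`g ∈ H Z_{i+1}` normalizes `H Z_i`, so `⟨H, H^g⟩ ≤ H Z_i`. Thus `u ∈ M`, a contradiction.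
-/

/-- The conjugate subgroup `H^g = g⁻¹Hg`. -/
def conjSub {G : Type*} [Group G] (g : G) (H : Subgroup G) : Subgroup G :=
  H.map (MulAut.conj g⁻¹).toMonoidHom

/-- `H` is abnormal in `G`: `g ∈ ⟨H, H^g⟩` for every `g ∈ G`. -/
def IsAbnormal {G : Type*} [Group G] (H : Subgroup G) : Prop :=
  ∀ g : G, g ∈ H ⊔ conjSub g H

/-- `H` is abnormal in the subgroup `B`: `H ≤ B` and `g ∈ ⟨H, H^g⟩` for every `g ∈ B`. -/
def IsAbnormalIn {G : Type*} [Group G] (H B : Subgroup G) : Prop :=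
  H ≤ B ∧ ∀ g ∈ B, g ∈ H ⊔ conjSub g H

open Subgroup

section conjSub

variable {G : Type*} [Group G]

lemma mem_conjSub {g x : G} {H : Subgroup G} : x ∈ conjSub g H ↔ g * x * g⁻¹ ∈ H := by
  refine ⟨?_, fun hx ↦ ⟨g * x * g⁻¹, hx, by simp [mul_assoc]⟩⟩
  rintro ⟨y, hy, rfl⟩
  simpa [mul_assoc] using hy

lemma conjSub_mono {g : G} {H K : Subgroup G} (hHK : H ≤ K) : conjSub g H ≤ conjSub g K :=
  map_mono hHK

lemma conjSub_le_of_le_of_mem {g : G} {H B : Subgroup G} (hHB : H ≤ B) (hg : g ∈ B) :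
    conjSub g H ≤ B := by
  intro x hx
  have hxB : g⁻¹ * (g * x * g⁻¹) * g ∈ B :=
    mul_mem (mul_mem (inv_mem hg) (hHB (mem_conjSub.mp hx))) hg
  simpa [mul_assoc] using hxB

lemma conjSub_le_of_mem_normalizer {g : G} {H S : Subgroup G} (hg : g ∈ normalizer (S : Set G))
    (hHS : H ≤ S) : conjSub g H ≤ S :=
  fun _ hx ↦ (mem_normalizer_iff.mp hg _).mpr (hHS (mem_conjSub.mp hx))

lemma map_conjSub {N : Type*} [Group N] (f : G →* N) (g : G) (H : Subgroup G) :
    (conjSub g H).map f = conjSub (f g) (H.map f) := by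
  ext x
  simp [conjSub, mem_map]

lemma fg_zpowers (g : G) : (zpowers g).FG :=
  ⟨{g}, by simp [zpowers_eq_closure]⟩

lemma upperCentralSeries_succ_le_normalizer {n : ℕ} {S : Subgroup G}
    (hS : Subgroup.upperCentralSeries G n ≤ S) :
    Subgroup.upperCentralSeries G (n + 1) ≤ normalizer (S : Set G) :=
  le_normalizer_iff_commutator_le_right.mpr <|
    (commutator_mono le_rfl le_top).trans <| (commutator_upperCentralSeries_top_le G n).trans hS

lemma mem_of_mem_sup_conjSub_of_isNilpotent [Group.IsNilpotent G] {H : Subgroup G} {g : G}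
    (hg : g ∈ H ⊔ conjSub g H) : g ∈ H := by
  obtain ⟨n, hn⟩ := Group.IsNilpotent.nilpotent' (G := G)
  suffices ∀ i, g ∈ H ⊔ Subgroup.upperCentralSeries G i → g ∈ H from this n (by simp [hn])
  intro i
  induction i with
  | zero => simp
  | succ i ih =>
    intro hgi
    have hN : H ⊔ Subgroup.upperCentralSeries G (i + 1) ≤
        normalizer ((H ⊔ Subgroup.upperCentralSeries G i : Subgroup G) : Set G) :=
      sup_le (le_sup_left.trans le_normalizer) (upperCentralSeries_succ_le_normalizer le_sup_right)
    exact ih (sup_le le_sup_left (conjSub_le_of_mem_normalizer (hN hgi) le_sup_left) hg)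

lemma exists_fg_le_mem_sup_conjSub {H : Subgroup G} {g x : G} (hx : x ∈ H ⊔ conjSub g H) :
    ∃ K : Subgroup G, K.FG ∧ K ≤ H ∧ x ∈ K ⊔ conjSub g K := by
  rw [sup_eq_closure] at hx
  induction hx using closure_induction with
  | mem y hy =>
    rcases hy with hy | hy
    · exact ⟨zpowers y, fg_zpowers y, zpowers_le.mpr hy, mem_sup_left (mem_zpowers y)⟩
    · exact ⟨zpowers (g * y * g⁻¹), fg_zpowers _, zpowers_le.mpr (mem_conjSub.mp hy),
        mem_sup_right (mem_conjSub.mpr (mem_zpowers _))⟩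
  | one => exact ⟨⊥, FG.bot, bot_le, one_mem _⟩
  | mul y z _ _ hy hz =>
    obtain ⟨K, hKfg, hKH, hyK⟩ := hy
    obtain ⟨L, hLfg, hLH, hzL⟩ := hz
    exact ⟨K ⊔ L, hKfg.sup hLfg, sup_le hKH hLH,
      mul_mem (sup_le_sup le_sup_left (conjSub_mono le_sup_left) hyK)
        (sup_le_sup le_sup_right (conjSub_mono le_sup_right) hzL)⟩
  | inv y _ hy =>
    obtain ⟨K, hKfg, hKH, hyK⟩ := hy
    exact ⟨K, hKfg, hKH, inv_mem hyK⟩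

lemma mem_sup_conjSub_subgroupOf {F K : Subgroup G} {g : G} (hgF : g ∈ F) (hKF : K ≤ F)
    (hg : g ∈ K ⊔ conjSub g K) :
    (⟨g, hgF⟩ : F) ∈ K.subgroupOf F ⊔ conjSub ⟨g, hgF⟩ (K.subgroupOf F) := by
  rwa [← mem_map_iff_mem F.subtype_injective, Subgroup.map_sup, map_conjSub,
    subgroupOf_map_subtype, inf_of_le_left hKF]

lemma mem_of_mem_sup_conjSub_of_locallyNilpotent
    (hLN : ∀ S : Subgroup G, S.FG → Group.IsNilpotent S) {H : Subgroup G} {g : G}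
    (hg : g ∈ H ⊔ conjSub g H) : g ∈ H := by
  obtain ⟨K, hKfg, hKH, hgK⟩ := exists_fg_le_mem_sup_conjSub hg
  have hgF : g ∈ K ⊔ zpowers g := mem_sup_right (mem_zpowers g)
  have := hLN _ (hKfg.sup (fg_zpowers g))
  exact hKH (mem_subgroupOf.mp (mem_of_mem_sup_conjSub_of_isNilpotent
    (mem_sup_conjSub_subgroupOf hgF le_sup_left hgK)))

end conjSub

theorem maximal_subgroup_normal_of_locallyNilpotent {G : Type*} [Group G]
    (hLN : ∀ S : Subgroup G, S.FG → Group.IsNilpotent S)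
    (U M : Subgroup G) (hMU : M < U)
    (hmax : ∀ S : Subgroup G, M < S → S ≤ U → S = U) :
    ∀ u ∈ U, ∀ m ∈ M, u * m * u⁻¹ ∈ M := by
  intro u hu m hm
  by_contra hconj
  have hmem : u * m * u⁻¹ ∈ conjSub u⁻¹ M := mem_conjSub.mpr (by simpa [mul_assoc] using hm)
  have hsup : M ⊔ conjSub u⁻¹ M = U :=
    hmax _ (left_lt_sup.mpr fun hle ↦ hconj (hle hmem))
      (sup_le hMU.le (conjSub_le_of_le_of_mem hMU.le (inv_mem hu)))
  have huM : u⁻¹ ∈ M :=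
    mem_of_mem_sup_conjSub_of_locallyNilpotent hLN (hsup ▸ inv_mem hu)
  exact hconj (mul_mem (mul_mem (inv_mem_iff.mp huM) hm) huM)
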